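/- Let ω be a weight function in the class W₀ with associated weight matrix {W^(ℓ) : ℓ > 0}. The following are equivalent: (i) ω satisfies condition (ω₆); (ii) the matrix is constant, i.e. W^(ℓ) ≈ W^(ℓ') for all ℓ, ℓ' > 0; (iii) there exist ℓ, ℓ₁ > 0 with ℓ > 2ℓ₁ and W^(ℓ) ≼ W^(ℓ₁). -/

import Mathlib

open Real Filter Asymptotics Set
open scoped ENNReal Topology

noncomputable section

/-- A weight function: nonnegative, non-decreasing on `[0,∞)`, tending to `+∞`. -/
def IsWeightFct (ω : ℝ → ℝ) : Prop :=
  (∀ t : ℝ, 0 ≤ ω t) ∧ MonotoneOn ω (Ici (0:ℝ)) ∧ Tendsto ω atTop atTop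

/-- Condition `(ω₁)`: `ω(2t) = O(ω(t))`. -/
def HasOm1 (ω : ℝ → ℝ) : Prop :=
  ∃ L : ℝ, 1 ≤ L ∧ ∀ t : ℝ, 0 ≤ t → ω (2 * t) ≤ L * (ω t + 1)

/-- Condition `(ω₆)`. -/
def HasOm6 (ω : ℝ → ℝ) : Prop :=
  ∃ H : ℝ, 1 ≤ H ∧ ∀ t : ℝ, 0 ≤ t → 2 * ω t ≤ ω (H * t) + H

/-- The class `W₀` of (normalized) Braun-Meise-Taylor weight functions. -/
def IsW0 (ω : ℝ → ℝ) : Prop :=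
  IsWeightFct ω ∧ ContinuousOn ω (Ici (0:ℝ)) ∧ (∀ t ∈ Icc (0:ℝ) 1, ω t = 0) ∧
    ((fun t : ℝ => Real.log t) =o[atTop] ω) ∧
    ConvexOn ℝ univ (fun y : ℝ => ω (Real.exp y))

/-- Legendre-Fenchel-Young conjugate `φ*_ω`. -/
def phiStar (ω : ℝ → ℝ) (x : ℝ) : ℝ :=
  sSup {z : ℝ | ∃ y : ℝ, 0 ≤ y ∧ z = x * y - ω (Real.exp y)}

/-- The sequence `W^(ℓ)` of the associated weight matrix of `ω`. -/
def assocSeq (ω : ℝ → ℝ) (ℓ : ℝ) (p : ℕ) : ℝ :=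
  Real.exp ((1 / ℓ) * phiStar ω (ℓ * (p : ℝ)))

/-- The weight function `ω_M` associated with a sequence `M`. -/
def omegaSeq (M : ℕ → ℝ) (t : ℝ) : ℝ :=
  sSup {z : ℝ | ∃ p : ℕ, z = Real.log (t ^ p / M p)}

/-- Property `(P_{ω,γ})`. -/
def gammaProp (ω : ℝ → ℝ) (g : ℝ) : Prop :=
  ∃ K : ℝ, 1 < K ∧
    limsup (fun t : ℝ => ((ω (K ^ g * t) / ω t : ℝ) : EReal)) atTop < (K : EReal)

/-- Property `(P̄_{ω,γ})`. -/
def gammaBarProp (ω : ℝ → ℝ) (g : ℝ) : Prop :=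
  ∃ A : ℝ, 1 < A ∧
    (A : EReal) < liminf (fun t : ℝ => ((ω (A ^ g * t) / ω t : ℝ) : EReal)) atTop

/-- The growth index `γ(ω) ∈ [0,∞]`. -/
def gammaIdx (ω : ℝ → ℝ) : ℝ≥0∞ :=
  ⨆ (g : ℝ) (_ : 0 < g ∧ gammaProp ω g), ENNReal.ofReal g

/-- The growth index `γ̄(ω) ∈ [0,∞]` (`+∞` if no admissible `γ` exists). -/
def gammaBarIdx (ω : ℝ → ℝ) : ℝ≥0∞ :=
  sInf (ENNReal.ofReal '' {g : ℝ | 0 < g ∧ gammaBarProp ω g})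

/-- Generalized lower Legendre conjugate `σ ⋆̌ τ`. -/
def lowerConj (σ τ : ℝ → ℝ) (t : ℝ) : ℝ :=
  sInf {z : ℝ | ∃ s : ℝ, 0 < s ∧ z = σ s + τ (t / s)}

/-- Generalized upper Legendre conjugate `σ ⋆̂ τ`. -/
def upperConj (σ τ : ℝ → ℝ) (t : ℝ) : ℝ :=
  if t = 0 then σ 0 - τ 0 else sSup {z : ℝ | ∃ s : ℝ, 0 ≤ s ∧ z = σ s - τ (s / t)}

/-- `σ ⋆̂ τ` is well-defined, i.e. `σ⋆̂τ(t) < +∞` for every `t`. -/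
def UpperConjWD (σ τ : ℝ → ℝ) : Prop :=
  ∀ t : ℝ, 0 < t → BddAbove {z : ℝ | ∃ s : ℝ, 0 ≤ s ∧ z = σ s - τ (s / t)}

/-- Lower Legendre envelope `h_⋆`. -/
def lowerEnv (h : ℝ → ℝ) (t : ℝ) : ℝ :=
  sInf {z : ℝ | ∃ u : ℝ, 0 < u ∧ z = h u + t * u}

/-- Upper Legendre envelope `h^⋆`. -/
def upperEnv (h : ℝ → ℝ) (t : ℝ) : ℝ :=
  sSup {z : ℝ | ∃ s : ℝ, 0 ≤ s ∧ z = h s - t * s}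

/-- `(((ω^ι)^α)_⋆)^{1/α}` (which equals `ω ⋆̌ id^{1/α}`). -/
def lowerCompose (ω : ℝ → ℝ) (α : ℝ) (t : ℝ) : ℝ :=
  lowerEnv (fun u : ℝ => ω (1 / u ^ α)) (t ^ (1 / α))

/-- `(((ω^α)^⋆)^ι)^{1/α}` (which equals `ω ⋆̂ id^{1/α}`). -/
def upperCompose (ω : ℝ → ℝ) (α : ℝ) (t : ℝ) : ℝ :=
  upperEnv (fun s : ℝ => ω (s ^ α)) (1 / t ^ (1 / α))

/-- Equivalence `σ ∼ τ` of weight functions. -/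
def WeightEquiv (σ τ : ℝ → ℝ) : Prop :=
  σ =O[atTop] τ ∧ τ =O[atTop] σ

/-- Relation `M ≼ N` for sequences: `sup_{p ≥ 1} (M_p/N_p)^{1/p} < ∞`. -/
def seqPrec (M N : ℕ → ℝ) : Prop :=
  ∃ C : ℝ, ∀ p : ℕ, 1 ≤ p → (M p / N p) ^ (1 / (p : ℝ)) ≤ C

/-- Relation `M ◁ N` for sequences: `(M_p/N_p)^{1/p} → 0`. -/
def seqTriangle (M N : ℕ → ℝ) : Prop :=
  Tendsto (fun p : ℕ => (M p / N p) ^ (1 / (p : ℝ))) atTop (𝓝 0)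

/-- Equivalence `M ≈ N` of sequences. -/
def seqEquiv (M N : ℕ → ℝ) : Prop := seqPrec M N ∧ seqPrec N M

/-- The Gevrey sequence `G^α`. -/
def gevrey (α : ℝ) (p : ℕ) : ℝ := (p.factorial : ℝ) ^ α

/-- The quotient sequence `μ_p = M_p / M_{p-1}`, `μ₀ = 1`. -/
def quotSeq (M : ℕ → ℝ) : ℕ → ℝ
  | 0 => 1
  | (p + 1) => M (p + 1) / M p

/-- Condition `(β,Q)`: `liminf_{p} μ_{Qp}/μ_p > Q^β`. -/
def condBQ (M : ℕ → ℝ) (β : ℝ) (Q : ℕ) : Prop :=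
  ((((Q : ℝ) ^ β : ℝ)) : EReal) <
    liminf (fun p : ℕ => ((quotSeq M (Q * p) / quotSeq M p : ℝ) : EReal)) atTop

/-- Thilliez's growth index `γ(M) ∈ [0,∞]`. -/
def thilliezIdx (M : ℕ → ℝ) : ℝ≥0∞ :=
  ⨆ (β : ℝ) (_ : 0 ≤ β ∧ ∃ Q : ℕ, 2 ≤ Q ∧ condBQ M β Q), ENNReal.ofReal β

/-- The Beurling Gelfand-Shilov space `S_(σ)(ℝ)` (membership predicate). -/
def MemSBeurling (σ : ℝ → ℝ) (f : ℝ → ℂ) : Prop :=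
  ContDiff ℝ (⊤ : ℕ∞) f ∧ ∀ ℓ : ℝ, 0 < ℓ → ∃ C : ℝ, ∀ x : ℝ, ∀ j k : ℕ,
    (1 + |x|) ^ k * ‖iteratedDeriv j f x‖ ≤ C * assocSeq σ ℓ (j + k)

/-- The polynomial `ψ(x) = x² + 1/4`. -/
def psiMap (x : ℝ) : ℝ := x ^ 2 + 1 / 4

/-- The resolvent operator `R_μ = ∑_m C_{ψ_m}/μ^{m+1}`. -/
def Rres (μ : ℂ) (f : ℝ → ℂ) (x : ℝ) : ℂ :=
  ∑' m : ℕ, (μ ^ (m + 1))⁻¹ * f (psiMap^[m] x)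

-- ### auxiliary lemmas

lemma phiSet_bddAbove {ω : ℝ → ℝ} (hω : IsW0 ω) (x : ℝ) :
    BddAbove {z : ℝ | ∃ y : ℝ, 0 ≤ y ∧ z = x * y - ω (Real.exp y)} := by
  obtain ⟨⟨hpos, hmono, _⟩, _, _, hlit, _⟩ := hω
  have hc : (0:ℝ) < 1/(|x|+1) := by positivity
  obtain ⟨T, hT⟩ := eventually_atTop.1 (hlit.def hc)
  set Y := max (Real.log (max T 1)) 0 with hYdef
  refine ⟨|x| * Y, ?_⟩
  rintro z ⟨y, hy, rfl⟩
  have hY0 : 0 ≤ Y := le_max_right _ _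
  rcases le_or_gt y Y with h | h
  · have h1 : x * y ≤ |x| * y := mul_le_mul_of_nonneg_right (le_abs_self x) hy
    have h2 : |x| * y ≤ |x| * Y := mul_le_mul_of_nonneg_left h (abs_nonneg x)
    have := hpos (Real.exp y)
    linarith
  · have hTe : max T 1 ≤ Real.exp y := by
      rw [← Real.exp_log (by positivity : (0:ℝ) < max T 1)]
      exact Real.exp_le_exp.2 (le_of_lt (lt_of_le_of_lt (le_max_left _ _) h))
    have h3 := hT (Real.exp y) (le_trans (le_max_left T 1) hTe)
    rw [Real.norm_eq_abs, Real.norm_eq_abs, Real.log_exp, abs_of_nonneg hy,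
      abs_of_nonneg (hpos _)] at h3
    have h4 : (|x|+1) * y ≤ ω (Real.exp y) := by
      have hmul : (|x|+1) * (1/(|x|+1)) = 1 := by
        field_simp
      nlinarith [abs_nonneg x, hpos (Real.exp y)]
    have h5 : x * y ≤ |x| * y := mul_le_mul_of_nonneg_right (le_abs_self x) hy
    nlinarith [mul_nonneg (abs_nonneg x) hY0]

lemma phiStar_ge {ω : ℝ → ℝ} (hω : IsW0 ω) {x y : ℝ} (hy : 0 ≤ y) :
    x * y - ω (Real.exp y) ≤ phiStar ω x :=
  le_csSup (phiSet_bddAbove hω x) ⟨y, hy, rfl⟩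

lemma phiStar_le {ω : ℝ → ℝ} {x B : ℝ}
    (hB : ∀ y : ℝ, 0 ≤ y → x * y - ω (Real.exp y) ≤ B) : phiStar ω x ≤ B := by
  have hne : (x * 0 - ω (Real.exp 0)) ∈ {z : ℝ | ∃ y : ℝ, 0 ≤ y ∧ z = x * y - ω (Real.exp y)} :=
    ⟨0, le_refl 0, rfl⟩
  apply csSup_le ⟨_, hne⟩
  rintro z ⟨y, hy, rfl⟩
  exact hB y hy

lemma phiStar_nonneg {ω : ℝ → ℝ} (hω : IsW0 ω) (x : ℝ) : 0 ≤ phiStar ω x := by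
  have h := phiStar_ge hω (x := x) (le_refl 0)
  have h1 : ω (Real.exp 0) = 0 := by
    rw [Real.exp_zero]; exact hω.2.2.1 1 ⟨zero_le_one, le_refl 1⟩
  rw [h1] at h; linarith

lemma phiStar_mono {ω : ℝ → ℝ} (hω : IsW0 ω) {x x' : ℝ} (h : x ≤ x') :
    phiStar ω x ≤ phiStar ω x' := by
  apply phiStar_le
  intro y hy
  have := phiStar_ge hω (x := x') hy
  nlinarith [mul_le_mul_of_nonneg_right h hy]

lemma phiStar_div_mono {ω : ℝ → ℝ} (hω : IsW0 ω) {x x' : ℝ} (hx : 0 < x) (h : x ≤ x') :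
    phiStar ω x / x ≤ phiStar ω x' / x' := by
  have hx' : 0 < x' := lt_of_lt_of_le hx h
  have key : phiStar ω x ≤ (x/x') * phiStar ω x' := by
    apply phiStar_le
    intro y hy
    have h1 : x * y - ω (Real.exp y) ≤ (x/x') * (x' * y - ω (Real.exp y)) := by
      have hr : x/x' ≤ 1 := (div_le_one hx').2 h
      have hωy := hω.1.1 (Real.exp y)
      have hc : (x/x') * x' = x := div_mul_cancel₀ x (ne_of_gt hx')
      nlinarith
    exact h1.trans (mul_le_mul_of_nonneg_left (phiStar_ge hω hy) (le_of_lt (div_pos hx hx')))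
  rw [div_le_div_iff₀ hx hx']
  have h2 : (x / x' * phiStar ω x') * x' = phiStar ω x' * x := by field_simp
  nlinarith [mul_le_mul_of_nonneg_right key hx'.le]

lemma assocSeq_pos (ω : ℝ → ℝ) (ℓ : ℝ) (p : ℕ) : 0 < assocSeq ω ℓ p := Real.exp_pos _

lemma seqPrec_of_bound {ω : ℝ → ℝ} {ℓ ℓ' a : ℝ} (hℓ : 0 < ℓ) (hℓ' : 0 < ℓ')
    (h : ∀ p : ℕ, 1 ≤ p →
      (1/ℓ) * phiStar ω (ℓ * p) ≤ (1/ℓ') * phiStar ω (ℓ' * p) + p * a) :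
    seqPrec (assocSeq ω ℓ) (assocSeq ω ℓ') := by
  refine ⟨Real.exp a, fun p hp => ?_⟩
  have hp0 : (0:ℝ) < p := by exact_mod_cast hp
  have hq : assocSeq ω ℓ p / assocSeq ω ℓ' p
      = Real.exp ((1/ℓ) * phiStar ω (ℓ * p) - (1/ℓ') * phiStar ω (ℓ' * p)) :=
    (Real.exp_sub _ _).symm
  rw [hq, Real.rpow_def_of_pos (Real.exp_pos _), Real.log_exp, Real.exp_le_exp]
  have h2 := h p hp
  rw [mul_one_div, div_le_iff₀ hp0]
  linarith

lemma seqPrec_of_le {ω : ℝ → ℝ} (hω : IsW0 ω) {ℓ ℓ' : ℝ} (hℓ : 0 < ℓ) (h : ℓ ≤ ℓ') :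
    seqPrec (assocSeq ω ℓ) (assocSeq ω ℓ') := by
  have hℓ' : 0 < ℓ' := lt_of_lt_of_le hℓ h
  have hb := seqPrec_of_bound (ω := ω) (a := 0) hℓ hℓ' ?_
  · simpa using hb
  intro p hp
  have hp0 : (0:ℝ) < p := by exact_mod_cast hp
  have hd := phiStar_div_mono hω (x := ℓ * p) (x' := ℓ' * p) (by positivity)
    (mul_le_mul_of_nonneg_right h hp0.le)
  rw [div_le_div_iff₀ (by positivity) (by positivity)] at hd
  have hgoal : (1/ℓ) * phiStar ω (ℓ * p) ≤ (1/ℓ') * phiStar ω (ℓ' * p) := by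
    rw [one_div_mul_eq_div, one_div_mul_eq_div, div_le_div_iff₀ hℓ hℓ']
    nlinarith
  linarith

lemma seqPrec_trans {M N P : ℕ → ℝ} (hM : ∀ p, 0 < M p) (hN : ∀ p, 0 < N p)
    (hP : ∀ p, 0 < P p) (h1 : seqPrec M N) (h2 : seqPrec N P) : seqPrec M P := by
  obtain ⟨C₁, h₁⟩ := h1
  obtain ⟨C₂, h₂⟩ := h2
  refine ⟨C₁ * C₂, fun p hp => ?_⟩
  have e : M p / P p = (M p / N p) * (N p / P p) := by
    field_simp [(hN p).ne', (hP p).ne']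
  rw [e, Real.mul_rpow (div_nonneg (hM p).le (hN p).le) (div_nonneg (hN p).le (hP p).le)]
  have g1 : (0:ℝ) ≤ (M p / N p) ^ (1/(p:ℝ)) :=
    Real.rpow_nonneg (div_nonneg (hM p).le (hN p).le) _
  have g2 : (0:ℝ) ≤ (N p / P p) ^ (1/(p:ℝ)) :=
    Real.rpow_nonneg (div_nonneg (hN p).le (hP p).le) _
  exact mul_le_mul (h₁ p hp) (h₂ p hp) g2 (le_trans g1 (h₁ p hp))

lemma om6_phiStar {ω : ℝ → ℝ} (hω : IsW0 ω) {H : ℝ} (hH : 1 ≤ H)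
    (h6 : ∀ t : ℝ, 0 ≤ t → 2 * ω t ≤ ω (H * t) + H) {x : ℝ} (hx : 0 ≤ x) :
    phiStar ω (2*x) ≤ 2 * phiStar ω x + 2*x*Real.log H + H := by
  have hH0 : (0:ℝ) < H := lt_of_lt_of_le one_pos hH
  have hh0 : 0 ≤ Real.log H := Real.log_nonneg hH
  apply phiStar_le
  intro y hy
  rcases le_or_gt (Real.log H) y with h | h
  · have h1 := h6 (Real.exp (y - Real.log H)) (Real.exp_pos _).le
    have h2 : H * Real.exp (y - Real.log H) = Real.exp y := by
      rw [Real.exp_sub, Real.exp_log hH0]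
      field_simp
    rw [h2] at h1
    have h3 := phiStar_ge hω (x := x) (y := y - Real.log H) (by linarith)
    nlinarith
  · have h4 := hω.1.1 (Real.exp y)
    have h5 := phiStar_nonneg hω x
    nlinarith

lemma om6_double {ω : ℝ → ℝ} (hω : IsW0 ω) (h6 : HasOm6 ω) {ℓ : ℝ} (hℓ : 0 < ℓ) :
    seqPrec (assocSeq ω (2*ℓ)) (assocSeq ω ℓ) := by
  obtain ⟨H, hH1, key⟩ := h6
  have hH0 : (0:ℝ) < H := lt_of_lt_of_le one_pos hH1
  have hh0 : 0 ≤ Real.log H := Real.log_nonneg hH1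
  apply seqPrec_of_bound (a := Real.log H + H/(2*ℓ)) (by positivity) hℓ
  intro p hp
  have hp0 : (0:ℝ) < p := by exact_mod_cast hp
  have hp1 : (1:ℝ) ≤ p := by exact_mod_cast hp
  have hx : (0:ℝ) ≤ ℓ * p := by positivity
  have h1 := om6_phiStar hω hH1 key hx
  have e1 : 2*ℓ*(p:ℝ) = 2*(ℓ*p) := by ring
  rw [e1]
  have h2 := mul_le_mul_of_nonneg_left h1 (le_of_lt (by positivity : (0:ℝ) < 1/(2*ℓ)))
  have e2 : (1/(2*ℓ)) * (2 * phiStar ω (ℓ*p) + 2*(ℓ*p)*Real.log H + H)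
      = (1/ℓ) * phiStar ω (ℓ*p) + p*Real.log H + H/(2*ℓ) := by
    field_simp
  rw [e2] at h2
  have h3 : (p:ℝ)*Real.log H + H/(2*ℓ) ≤ p*(Real.log H + H/(2*ℓ)) := by
    have : H/(2*ℓ) ≤ (p:ℝ)*(H/(2*ℓ)) := le_mul_of_one_le_left (by positivity) hp1
    nlinarith
  linarith

lemma om6_pow {ω : ℝ → ℝ} (hω : IsW0 ω) (h6 : HasOm6 ω) {ℓ : ℝ} (hℓ : 0 < ℓ) :
    ∀ n : ℕ, seqPrec (assocSeq ω ((2:ℝ)^n * ℓ)) (assocSeq ω ℓ) := by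
  intro n
  induction n with
  | zero => simpa using seqPrec_of_le hω hℓ (le_refl ℓ)
  | succ n ih =>
    have hpow : (0:ℝ) < (2:ℝ)^n * ℓ := by positivity
    have h1 := om6_double hω h6 hpow
    have e : 2 * ((2:ℝ)^n * ℓ) = (2:ℝ)^(n+1) * ℓ := by ring
    rw [e] at h1
    exact seqPrec_trans (fun p => assocSeq_pos ω _ p) (fun p => assocSeq_pos ω _ p)
      (fun p => assocSeq_pos ω _ p) h1 ih

lemma om6_allprec {ω : ℝ → ℝ} (hω : IsW0 ω) (h6 : HasOm6 ω) {ℓ ℓ' : ℝ}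
    (hℓ : 0 < ℓ) (hℓ' : 0 < ℓ') : seqPrec (assocSeq ω ℓ') (assocSeq ω ℓ) := by
  rcases le_total ℓ' ℓ with h | h
  · exact seqPrec_of_le hω hℓ' h
  · obtain ⟨n, hn⟩ := pow_unbounded_of_one_lt (ℓ'/ℓ) (one_lt_two (α := ℝ))
    have h2 : ℓ' ≤ (2:ℝ)^n * ℓ := by
      rw [div_lt_iff₀ hℓ] at hn
      linarith
    exact seqPrec_trans (fun p => assocSeq_pos ω _ p) (fun p => assocSeq_pos ω _ p)
      (fun p => assocSeq_pos ω _ p) (seqPrec_of_le hω hℓ' h2) (om6_pow hω h6 hℓ n)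

lemma phi_mono {ω : ℝ → ℝ} (hω : IsW0 ω) {a b : ℝ} (hab : a ≤ b) :
    ω (Real.exp a) ≤ ω (Real.exp b) :=
  hω.1.2.1 (Set.mem_Ici.2 (Real.exp_pos a).le) (Set.mem_Ici.2 (Real.exp_pos b).le)
    (Real.exp_le_exp.2 hab)

/-- superlinearity of `y ↦ ω (exp y)`. -/
lemma phi_superlinear {ω : ℝ → ℝ} (hω : IsW0 ω) (K : ℝ) :
    ∃ Y : ℝ, 0 ≤ Y ∧ ∀ y : ℝ, Y ≤ y → K * y ≤ ω (Real.exp y) := by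
  have hc : (0:ℝ) < 1/(|K|+1) := by positivity
  obtain ⟨T, hT⟩ := eventually_atTop.1 (hω.2.2.2.1.def hc)
  refine ⟨max (Real.log (max T 1)) 0, le_max_right _ _, fun y hy => ?_⟩
  have hy0 : 0 ≤ y := le_trans (le_max_right _ _) hy
  have hTe : max T 1 ≤ Real.exp y := by
    rw [← Real.exp_log (by positivity : (0:ℝ) < max T 1)]
    exact Real.exp_le_exp.2 (le_trans (le_max_left _ _) hy)
  have h3 := hT (Real.exp y) (le_trans (le_max_left T 1) hTe)
  rw [Real.norm_eq_abs, Real.norm_eq_abs, Real.log_exp, abs_of_nonneg hy0,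
    abs_of_nonneg (hω.1.1 _)] at h3
  have hmul : (|K|+1) * (1/(|K|+1)) = 1 := by field_simp
  nlinarith [abs_nonneg K, le_abs_self K, hω.1.1 (Real.exp y)]

/-- subgradient inequality: with `s = φ(y+1) - φ(y)`, `φ(y) + φ*(s) ≤ s*(y+1)`. -/
lemma phi_subgradient {ω : ℝ → ℝ} (hω : IsW0 ω) {y : ℝ} (hy : 0 ≤ y) :
    ω (Real.exp y) + phiStar ω (ω (Real.exp (y+1)) - ω (Real.exp y))
      ≤ (ω (Real.exp (y+1)) - ω (Real.exp y)) * (y+1) := by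
  have hconv := hω.2.2.2.2
  set s := ω (Real.exp (y+1)) - ω (Real.exp y) with hs
  have hs0 : 0 ≤ s := sub_nonneg.2 (phi_mono hω (by linarith))
  have key : phiStar ω s ≤ s*(y+1) - ω (Real.exp y) := by
    apply phiStar_le
    intro z hz
    rcases lt_or_ge z y with h | h
    · have hsl : (ω (Real.exp y) - ω (Real.exp z))/(y - z)
          ≤ (ω (Real.exp (y+1)) - ω (Real.exp y))/((y+1) - y) :=
        hconv.slope_mono_adjacent (Set.mem_univ z) (Set.mem_univ (y+1)) h (by linarith)
      rw [show ((y+1) - y : ℝ) = 1 by ring, div_one] at hsl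
      have hyz : 0 < y - z := by linarith
      rw [div_le_iff₀ hyz] at hsl
      nlinarith
    · rcases le_or_gt z (y+1) with h' | h'
      · have hm := phi_mono hω h
        nlinarith
      · have hsl : (ω (Real.exp (y+1)) - ω (Real.exp y))/((y+1) - y)
            ≤ (ω (Real.exp z) - ω (Real.exp (y+1)))/(z - (y+1)) :=
          hconv.slope_mono_adjacent (Set.mem_univ y) (Set.mem_univ z) (by linarith) h'
        rw [show ((y+1) - y : ℝ) = 1 by ring, div_one] at hsl
        have hzz : 0 < z - (y+1) := by linarith
        rw [le_div_iff₀ hzz] at hsl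
        nlinarith
  linarith

/-- slope from the origin bounds the unit increment from below. -/
lemma phi_slope_lb {ω : ℝ → ℝ} (hω : IsW0 ω) {y : ℝ} (hy : 0 < y) :
    ω (Real.exp y) / y ≤ ω (Real.exp (y+1)) - ω (Real.exp y) := by
  have hconv := hω.2.2.2.2
  have hsl : (ω (Real.exp y) - ω (Real.exp 0))/(y - 0)
      ≤ (ω (Real.exp (y+1)) - ω (Real.exp y))/((y+1) - y) :=
    hconv.slope_mono_adjacent (Set.mem_univ 0) (Set.mem_univ (y+1)) hy (by linarith)
  rw [show ((y+1) - y : ℝ) = 1 by ring, div_one, sub_zero, Real.exp_zero,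
    hω.2.2.1 1 ⟨zero_le_one, le_refl 1⟩, sub_zero] at hsl
  exact hsl

lemma prec_to_om6 {ω : ℝ → ℝ} (hω : IsW0 ω) {ℓ₁ ℓ : ℝ} (h1 : 0 < ℓ₁) (h2 : 2*ℓ₁ < ℓ)
    (hp : seqPrec (assocSeq ω ℓ) (assocSeq ω ℓ₁)) : HasOm6 ω := by
  have hℓ0 : 0 < ℓ := by linarith
  obtain ⟨C, hC⟩ := hp
  set c := Real.log (max C 1) with hcdef
  have hc0 : 0 ≤ c := Real.log_nonneg (le_max_right _ _)
  -- Step 1: quantitative form of the hypothesis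
  have hkey : ∀ p : ℕ, 1 ≤ p →
      (1/ℓ) * phiStar ω (ℓ*p) ≤ (1/ℓ₁) * phiStar ω (ℓ₁*p) + p*c := by
    intro p hpge
    have hp0 : (0:ℝ) < p := by exact_mod_cast hpge
    have h3 := hC p hpge
    have hq : assocSeq ω ℓ p / assocSeq ω ℓ₁ p
        = Real.exp ((1/ℓ) * phiStar ω (ℓ*p) - (1/ℓ₁) * phiStar ω (ℓ₁*p)) :=
      (Real.exp_sub _ _).symm
    rw [hq, Real.rpow_def_of_pos (Real.exp_pos _), Real.log_exp] at h3
    have h4 : Real.exp (((1/ℓ) * phiStar ω (ℓ*p) - (1/ℓ₁) * phiStar ω (ℓ₁*p)) * (1/p))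
        ≤ max C 1 := le_trans h3 (le_max_left _ _)
    have h5 := (Real.le_log_iff_exp_le (by positivity : (0:ℝ) < max C 1)).2 h4
    rw [← hcdef, mul_one_div, div_le_iff₀ hp0] at h5
    linarith
  -- Step 2: doubling estimate for φ* at large arguments
  set u₀ := max (ℓ*ℓ₁/(ℓ-2*ℓ₁)) 1 with hu₀def
  have hu₀1 : (1:ℝ) ≤ u₀ := le_max_right _ _
  have hE2 : ∀ u : ℝ, u₀ ≤ u → phiStar ω (2*u) ≤ 2*phiStar ω u + 2*c*u := by
    intro u hu
    have hu0 : 0 < u := lt_of_lt_of_le one_pos (le_trans hu₀1 hu)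
    set q := ⌈2*u/ℓ⌉₊ with hqdef
    have hq1 : 1 ≤ q := Nat.one_le_iff_ne_zero.2 (by
      have : 0 < q := Nat.ceil_pos.2 (by positivity)
      omega)
    have hq0 : (0:ℝ) < q := by exact_mod_cast hq1
    have hq2 : 2*u ≤ ℓ*q := by
      have := Nat.le_ceil (2*u/ℓ)
      rw [div_le_iff₀ hℓ0] at this
      rw [← hqdef] at this
      linarith
    have hq3 : ℓ₁*q ≤ u := by
      have h4 : (q:ℝ) < 2*u/ℓ + 1 := by
        rw [hqdef]; exact Nat.ceil_lt_add_one (by positivity)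
      have h5 : ℓ*ℓ₁/(ℓ-2*ℓ₁) ≤ u := le_trans (le_max_left _ _) hu
      have h6 : ℓ*ℓ₁ ≤ u*(ℓ-2*ℓ₁) := by
        rw [div_le_iff₀ (by linarith : (0:ℝ) < ℓ-2*ℓ₁)] at h5
        linarith
      have h7 : ℓ₁*(q:ℝ) ≤ ℓ₁*(2*u/ℓ + 1) := mul_le_mul_of_nonneg_left h4.le h1.le
      have h8 : ℓ₁*(2*u/ℓ) ≤ u - ℓ₁ := by
        rw [show ℓ₁*(2*u/ℓ) = (2*ℓ₁*u)/ℓ by ring, div_le_iff₀ hℓ0]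
        nlinarith
      nlinarith
    have d1 : phiStar ω (2*u)/(2*u) ≤ phiStar ω (ℓ*q)/(ℓ*q) :=
      phiStar_div_mono hω (by positivity) hq2
    have d3 : phiStar ω (ℓ₁*q)/(ℓ₁*q) ≤ phiStar ω u / u :=
      phiStar_div_mono hω (by positivity) hq3
    have d2 := hkey q hq1
    have d2' : phiStar ω (ℓ*q)/(ℓ*q) ≤ phiStar ω (ℓ₁*q)/(ℓ₁*q) + c := by
      have e1 : phiStar ω (ℓ*q)/(ℓ*q) = ((1/ℓ) * phiStar ω (ℓ*q))/q := by
        field_simp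
      have e2 : phiStar ω (ℓ₁*q)/(ℓ₁*q) = ((1/ℓ₁) * phiStar ω (ℓ₁*q))/q := by
        field_simp
      rw [e1, e2, div_add' _ _ _ (ne_of_gt hq0), div_le_div_iff₀ hq0 hq0]
      nlinarith
    have dcomb : phiStar ω (2*u)/(2*u) ≤ phiStar ω u / u + c := by linarith
    rw [div_le_iff₀ (by positivity : (0:ℝ) < 2*u)] at dcomb
    have hcanc : (phiStar ω u / u) * u = phiStar ω u := div_mul_cancel₀ _ (ne_of_gt hu0)
    nlinarith
  -- Step 3: threshold above which the unit increment of φ is ≥ u₀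
  obtain ⟨Y, hY0, hYK⟩ := phi_superlinear hω u₀
  set y₁ := max Y 1 with hy₁def
  have hy₁0 : (0:ℝ) < y₁ := lt_of_lt_of_le one_pos (le_max_right _ _)
  have hinc : ∀ y : ℝ, y₁ ≤ y → u₀ ≤ ω (Real.exp (y+1)) - ω (Real.exp y) := by
    intro y hy
    have hy0 : 0 < y := lt_of_lt_of_le hy₁0 hy
    have h3 := phi_slope_lb hω hy0
    have h4 : u₀ * y ≤ ω (Real.exp y) := hYK y (le_trans (le_max_left _ _) hy)
    have h5 : u₀ ≤ ω (Real.exp y) / y := by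
      rw [le_div_iff₀ hy0]; linarith
    linarith
  -- Step 4: assemble
  set H := max (Real.exp (c+1)) (2 * ω (Real.exp y₁) + 1) with hHdef
  have hH1 : 1 ≤ H := le_trans (Real.one_le_exp (by linarith)) (le_max_left _ _)
  refine ⟨H, hH1, fun t ht => ?_⟩
  rcases le_or_gt t 1 with hle | hgt
  · rw [hω.2.2.1 t ⟨ht, hle⟩]
    have := hω.1.1 (H*t)
    linarith
  · set y := Real.log t with hydef
    have hy0 : 0 ≤ y := Real.log_nonneg hgt.le
    have hty : Real.exp y = t := Real.exp_log (by linarith)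
    rcases lt_or_ge y y₁ with h' | h'
    · have hm : ω t ≤ ω (Real.exp y₁) := by
        rw [← hty]; exact phi_mono hω h'.le
      have hH2 : 2 * ω (Real.exp y₁) + 1 ≤ H := le_max_right _ _
      have := hω.1.1 (H*t)
      linarith
    · set s := ω (Real.exp (y+1)) - ω (Real.exp y) with hsdef
      have hsu : u₀ ≤ s := hinc y h'
      have hs0 : 0 ≤ s := le_trans (by linarith) hsu
      have e2 := hE2 s hsu
      have e4 := phi_subgradient hω hy0
      rw [← hsdef] at e4
      have young := phiStar_ge hω (x := 2*s) (y := y + (c+1)) (by linarith)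
      have hfin : 2 * ω (Real.exp y) ≤ ω (Real.exp (y + (c+1))) := by nlinarith
      have h5 : Real.exp (y + (c+1)) ≤ H*t := by
        rw [Real.exp_add]
        calc Real.exp y * Real.exp (c+1) ≤ Real.exp y * H :=
          mul_le_mul_of_nonneg_left (le_max_left _ _) (Real.exp_pos y).le
        _ = H * t := by rw [hty]; ring
      have h6 : ω (Real.exp (y + (c+1))) ≤ ω (H*t) :=
        hω.1.2.1 (Set.mem_Ici.2 (Real.exp_pos _).le)
          (Set.mem_Ici.2 (by positivity : (0:ℝ) ≤ H*t)) h5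
      rw [hty] at hfin
      linarith


theorem stmt10 (ω : ℝ → ℝ) (hω : IsW0 ω) :
    (HasOm6 ω ↔
      ∀ ℓ : ℝ, 0 < ℓ → ∀ ℓ' : ℝ, 0 < ℓ' → seqEquiv (assocSeq ω ℓ) (assocSeq ω ℓ')) ∧
    (HasOm6 ω ↔
      ∃ ℓ₁ : ℝ, 0 < ℓ₁ ∧ ∃ ℓ : ℝ, 2 * ℓ₁ < ℓ ∧ seqPrec (assocSeq ω ℓ) (assocSeq ω ℓ₁)) := by
  constructor
  · constructor
    · intro h6 ℓ hℓ ℓ' hℓ'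
      exact ⟨om6_allprec hω h6 hℓ' hℓ, om6_allprec hω h6 hℓ hℓ'⟩
    · intro h
      have h3 := h 3 (by norm_num) 1 one_pos
      exact prec_to_om6 hω one_pos (by norm_num) h3.1
  · constructor
    · intro h6
      exact ⟨1, one_pos, 3, by norm_num,
        om6_allprec hω h6 (show (0:ℝ) < 1 by norm_num) (show (0:ℝ) < 3 by norm_num)⟩
    · rintro ⟨ℓ₁, hℓ₁, ℓ, hℓ, hpr⟩
      exact prec_to_om6 hω hℓ₁ hℓ hpr
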